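/- The right ideal I = ⟨(q+1)³⟩ generated by (q+1)³ in the ring (ℍ[q], +, *) is not quasi prime: one has (q+1)² * (q+1) ∈ I, but (q+1)² ∉ I and (q+1)^s = (q+1)² ∉ I. -/

import Mathlib

/-- The quaternions ℍ. -/
abbrev Hq : Type := Quaternion ℝ

/-- A right ideal of a (possibly noncommutative) ring. -/
structure RightIdeal (R : Type) [Ring R] where
  carrier : Set R
  zero_mem : (0 : R) ∈ carrier
  add_mem : ∀ {x y : R}, x ∈ carrier → y ∈ carrier → x + y ∈ carrier
  mul_mem_right : ∀ {x : R} (y : R), x ∈ carrier → x * y ∈ carrier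

/-- The right ideal generated by a set. -/
def RightIdeal.span {R : Type} [Ring R] (s : Set R) : RightIdeal R where
  carrier := {x | ∀ I : RightIdeal R, s ⊆ I.carrier → x ∈ I.carrier}
  zero_mem := fun I _ => I.zero_mem
  add_mem := fun hx hy I hs => I.add_mem (hx I hs) (hy I hs)
  mul_mem_right := fun y hx I hs => I.mul_mem_right y (hx I hs)

/-- The regular conjugate `P^c` of a one-variable slice regular polynomial `P = Σ q^ℓ a_ℓ`,
namely `P^c = Σ q^ℓ (conj a_ℓ)`.  (The ring ℍ[q] with the slice product coincides with
`Polynomial Hq` with its usual multiplication.) -/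
noncomputable def pconj (P : Polynomial Hq) : Polynomial Hq :=
  ∑ k ∈ P.support, Polynomial.X ^ k * Polynomial.C (star (P.coeff k))

/-- The symmetrization `P^s = P * P^c`. -/
noncomputable def psymm (P : Polynomial Hq) : Polynomial Hq := P * pconj P

/-- A right ideal `I` is quasi prime if `P*Q ∈ I` implies `P ∈ I` or `Q^s ∈ I`. -/
def QuasiPrime (I : RightIdeal (Polynomial Hq)) : Prop :=
  ∀ P Q : Polynomial Hq, P * Q ∈ I.carrier → P ∈ I.carrier ∨ psymm Q ∈ I.carrier

/-- A right ideal `I` is completely prime if `P*Q ∈ I` and `P*I ⊆ I` imply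
`P ∈ I` or `Q ∈ I`. -/
def CompletelyPrime (I : RightIdeal (Polynomial Hq)) : Prop :=
  ∀ P Q : Polynomial Hq, P * Q ∈ I.carrier → (∀ R ∈ I.carrier, P * R ∈ I.carrier) →
    P ∈ I.carrier ∨ Q ∈ I.carrier

/-- The (right) radical `√I`: the intersection of all completely prime right ideals
containing `I`. -/
def radicalSet (I : RightIdeal (Polynomial Hq)) : Set (Polynomial Hq) :=
  ⋂ J ∈ {J : RightIdeal (Polynomial Hq) | CompletelyPrime J ∧ I.carrier ⊆ J.carrier}, J.carrier

/-! The generator `(q+1)³` left-divides `(q+1)² * (q+1)`, but by degree it does not left-divide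
`(q+1)²`. Since `q + 1` has real coefficients it is its own regular conjugate, so its
symmetrization is `(q+1)²` as well, and neither factor passes the quasi-prime test. -/

open Polynomial

namespace RightIdeal

variable {R : Type} [Ring R]

theorem subset_span (s : Set R) : s ⊆ (span s).carrier := fun _ hx _ hs => hs hx

/-- The right ideal `g * R`; in a noncommutative ring `g ∣ x` means `∃ r, x = g * r`. -/
def principal (g : R) : RightIdeal R where
  carrier := {x | g ∣ x}
  zero_mem := dvd_zero g
  add_mem := dvd_add
  mul_mem_right y hx := hx.mul_right y

theorem mem_span_singleton {g x : R} : x ∈ (span {g}).carrier ↔ g ∣ x :=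
  ⟨fun hx => hx (principal g) (Set.singleton_subset_iff.2 (dvd_refl g)),
    fun ⟨r, hr⟩ => hr ▸ (span {g}).mul_mem_right r (subset_span {g} rfl)⟩

end RightIdeal

theorem pconj_eq_self_of_star_coeff {P : Hq[X]} (h : ∀ k, star (P.coeff k) = P.coeff k) :
    pconj P = P := by
  conv_rhs => rw [P.as_sum_support]
  refine Finset.sum_congr rfl fun k _ => ?_
  rw [h, X_pow_mul, C_mul_X_pow_eq_monomial]

theorem pconj_map_algebraMap (p : ℝ[X]) :
    pconj (p.map (algebraMap ℝ Hq)) = p.map (algebraMap ℝ Hq) :=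
  pconj_eq_self_of_star_coeff fun k => by rw [coeff_map]; exact Quaternion.star_coe _

theorem psymm_X_add_one : psymm (X + 1 : Hq[X]) = (X + 1) ^ 2 := by
  have hreal : (X + 1 : Hq[X]) = (X + 1 : ℝ[X]).map (algebraMap ℝ Hq) := by
    rw [Polynomial.map_add, map_X, Polynomial.map_one]
  rw [psymm, hreal, pconj_map_algebraMap, sq]

theorem pow_notMem_span_pow {R : Type} [Ring R] [NoZeroDivisors R] {p : R[X]}
    (hp : 0 < p.natDegree) {m n : ℕ} (hmn : m < n) :
    p ^ m ∉ (RightIdeal.span {p ^ n}).carrier := by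
  rw [RightIdeal.mem_span_singleton]
  intro hdvd
  have hdeg := natDegree_le_of_dvd hdvd (pow_ne_zero m (ne_zero_of_natDegree_gt hp))
  rw [natDegree_pow, natDegree_pow] at hdeg
  exact absurd hdeg (not_le.2 (Nat.mul_lt_mul_of_pos_right hmn hp))

theorem X_add_one_sq_notMem_span_cube :
    (X + 1 : Hq[X]) ^ 2 ∉ (RightIdeal.span {(X + 1 : Hq[X]) ^ 3}).carrier :=
  pow_notMem_span_pow (by rw [← C_1, natDegree_X_add_C]; exact one_pos) (by norm_num)

/-- The right ideal `I = ⟨(q+1)³⟩` of ℍ[q] is not quasi prime: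
`(q+1)² * (q+1) ∈ I`, but `(q+1)² ∉ I` and `(q+1)^s = (q+1)² ∉ I`. -/
theorem span_cube_not_quasiPrime :
    ((Polynomial.X + 1 : Polynomial Hq)) ^ 2 * (Polynomial.X + 1) ∈
      (RightIdeal.span {((Polynomial.X + 1 : Polynomial Hq)) ^ 3}).carrier ∧
    ((Polynomial.X + 1 : Polynomial Hq)) ^ 2 ∉
      (RightIdeal.span {((Polynomial.X + 1 : Polynomial Hq)) ^ 3}).carrier ∧
    psymm (Polynomial.X + 1 : Polynomial Hq) = ((Polynomial.X + 1 : Polynomial Hq)) ^ 2 ∧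
    psymm (Polynomial.X + 1 : Polynomial Hq) ∉
      (RightIdeal.span {((Polynomial.X + 1 : Polynomial Hq)) ^ 3}).carrier ∧
    ¬ QuasiPrime (RightIdeal.span {((Polynomial.X + 1 : Polynomial Hq)) ^ 3}) := by
  have hmem : (X + 1 : Hq[X]) ^ 2 * (X + 1) ∈ (RightIdeal.span {(X + 1 : Hq[X]) ^ 3}).carrier :=
    RightIdeal.subset_span _ (pow_succ _ 2).symm
  have hsymm_notMem := psymm_X_add_one ▸ X_add_one_sq_notMem_span_cube
  exact ⟨hmem, X_add_one_sq_notMem_span_cube, psymm_X_add_one, hsymm_notMem,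
    fun hprime => (hprime _ _ hmem).elim X_add_one_sq_notMem_span_cube hsymm_notMem⟩
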